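/- In the setting of the marginal function f(x) = max_{y∈Y} φ(x, y), let y^ε: ℝⁿ → ℝᵐ be any single-valued map with y^ε(x) ∈ Y^ε(x) for all x ∈ ℝⁿ and ε > 0. Then for every x ∈ ℝⁿ and ε > 0: (a) f(x) − (ε/2)·inf_{y∈Y*(x)} ‖∇ₓφ(x, y)‖² ≤ φ(x, y^ε(x)) ≤ f(x); and (b) ‖∇ₓφ(x, y^ε(x))‖ ≤ inf_{y∈Y*(x)} ‖∇ₓφ(x, y)‖. -/
import Mathlib


open Filter Topology Set
open scoped RealInnerProductSpace NNReal

noncomputable section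

variable {E : Type*} [NormedAddCommGroup E] [InnerProductSpace ℝ E]

/-- The Clarke generalized directional derivative of `f` at `x` in direction `d`. -/
def clarkeDeriv (f : E → ℝ) (x d : E) : ℝ :=
  Filter.limsup (fun p : E × ℝ => (f (p.1 + p.2 • d) - f p.1) / p.2)
    ((𝓝 x) ×ˢ (𝓝[>] (0 : ℝ)))

/-- The Clarke subdifferential of `f` at `x`. -/
def clarkeSubdiff (f : E → ℝ) (x : E) : Set E :=
  {v | ∀ d : E, ⟪v, d⟫ ≤ clarkeDeriv f x d}

/-- Outer limit of `G x ε` along joint sequences `ε_k ↓ 0` and `x_k → x̄`. -/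
def SeqJointLimsup (G : E → ℝ → Set E) (xbar : E) : Set E :=
  {u | ∃ (eps : ℕ → ℝ) (xs : ℕ → E) (vs : ℕ → E),
    (∀ k, 0 < eps k) ∧ Tendsto eps atTop (𝓝 0) ∧ Tendsto xs atTop (𝓝 xbar) ∧
    (∀ k, vs k ∈ G (xs k) (eps k)) ∧ Tendsto vs atTop (𝓝 u)}

/-- Outer limit `limsup_{x → xbar} S x` of a set-valued map. -/
def SetMapLimsup (S : E → Set E) (xbar : E) : Set E :=
  {u | ∃ (xs : ℕ → E) (vs : ℕ → E),
    Tendsto xs atTop (𝓝 xbar) ∧ (∀ k, vs k ∈ S (xs k)) ∧ Tendsto vs atTop (𝓝 u)}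

/-- Outer limit of a family of sets `A ε` as `ε ↓ 0`. -/
def FamilyOuterLimit (A : ℝ → Set E) : Set E :=
  {u | ∃ (eps : ℕ → ℝ) (vs : ℕ → E), (∀ k, 0 < eps k) ∧ Tendsto eps atTop (𝓝 0) ∧
    (∀ k, vs k ∈ A (eps k)) ∧ Tendsto vs atTop (𝓝 u)}

/-- Inner limit of a family of sets `A ε` as `ε ↓ 0`. -/
def FamilyInnerLimit (A : ℝ → Set E) : Set E :=
  {u | ∀ eps : ℕ → ℝ, (∀ k, 0 < eps k) → Tendsto eps atTop (𝓝 0) →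
    ∃ vs : ℕ → E, (∀ᶠ k in atTop, vs k ∈ A (eps k)) ∧ Tendsto vs atTop (𝓝 u)}

/-- Painlevé–Kuratowski convergence of the family `A ε` to the set `B` as `ε ↓ 0`. -/
def PKTendsto (A : ℝ → Set E) (B : Set E) : Prop :=
  FamilyOuterLimit A ⊆ B ∧ B ⊆ FamilyInnerLimit A

/-- `g` is the minimal-norm element of `S`. -/
def IsMinNormElt (S : Set E) (g : E) : Prop :=
  g ∈ S ∧ ∀ v ∈ S, ‖g‖ ≤ ‖v‖

/-- A descent-oriented subdifferential for `f`:  for each fixed `ε > 0` the map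
`x ↦ G x ε` is closed-valued and locally bounded, (G1) the joint outer limit as
`ε ↓ 0`, `x → x̄` is contained in the Clarke subdifferential, and (G2) the sets
`limsup_{x → x̄} G x ε` converge in the Painlevé–Kuratowski sense, as `ε ↓ 0`,
to the singleton consisting of the minimal-norm Clarke subgradient. -/
structure IsDescentOrientedSubdiff (f : E → ℝ) (G : E → ℝ → Set E) : Prop where
  closedVals : ∀ ε : ℝ, 0 < ε → ∀ x : E, IsClosed (G x ε)
  locBounded : ∀ ε : ℝ, 0 < ε → ∀ x : E,
    ∃ δ > (0 : ℝ), ∃ M : ℝ, ∀ y : E, ‖y - x‖ < δ → ∀ v ∈ G y ε, ‖v‖ ≤ M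
  outerClarke : ∀ xbar : E, SeqJointLimsup G xbar ⊆ clarkeSubdiff f xbar
  minNormLimit : ∀ xbar : E, ∃ g : E, IsMinNormElt (clarkeSubdiff f xbar) g ∧
    PKTendsto (fun ε => SetMapLimsup (fun x => G x ε) xbar) {g}

variable {F : Type*} [NormedAddCommGroup F] [InnerProductSpace ℝ F]

/-- The marginal function `f(x) = max_{y ∈ Y} φ(x, y)`. -/
def marginalMax (φ : E → F → ℝ) (Y : Set F) (x : E) : ℝ :=
  sSup ((φ x) '' Y)

/-- The solution set `Y*(x)` of the inner maximization. -/
def maxSol (φ : E → F → ℝ) (Y : Set F) (x : E) : Set F :=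
  {y ∈ Y | ∀ y' ∈ Y, φ x y' ≤ φ x y}

/-- The solution set `Y^ε(x)` of the subgradient-regularized inner problem, where
`gx x y` denotes the partial gradient `∇ₓ φ (x, y)`. -/
def regMaxSol (φ : E → F → ℝ) (gx : E → F → E) (Y : Set F) (ε : ℝ) (x : E) : Set F :=
  {y ∈ Y | ∀ y' ∈ Y,
    φ x y' - ε / 2 * ‖gx x y'‖ ^ 2 ≤ φ x y - ε / 2 * ‖gx x y‖ ^ 2}

/-- Lemma: bounds for the subgradient-regularized problem: for any
single-valued selection `y^ε(x) ∈ Y^ε(x)`, for every `x` and `ε > 0`,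
(a) `f(x) - (ε/2)·inf_{y ∈ Y*(x)} ‖∇ₓφ(x,y)‖² ≤ φ(x, y^ε(x)) ≤ f(x)`, and
(b) `‖∇ₓφ(x, y^ε(x))‖ ≤ inf_{y ∈ Y*(x)} ‖∇ₓφ(x,y)‖`. -/
theorem regularized_selection_bounds {n m : ℕ}
    (Y : Set (EuclideanSpace ℝ (Fin m))) (hYne : Y.Nonempty)
    (hYconv : Convex ℝ Y) (hYcomp : IsCompact Y)
    (φ : EuclideanSpace ℝ (Fin n) → EuclideanSpace ℝ (Fin m) → ℝ)
    (gx : EuclideanSpace ℝ (Fin n) → EuclideanSpace ℝ (Fin m) → EuclideanSpace ℝ (Fin n))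
    (hgrad : ∀ x, ∀ y ∈ Y, HasGradientAt (fun x' => φ x' y) (gx x y) x)
    (hφcont : Continuous fun p : EuclideanSpace ℝ (Fin n) × EuclideanSpace ℝ (Fin m) => φ p.1 p.2)
    (hgxcont : Continuous fun p : EuclideanSpace ℝ (Fin n) × EuclideanSpace ℝ (Fin m) => gx p.1 p.2)
    (hconc : ∀ x, ConcaveOn ℝ Y (fun y => φ x y))
    (ysel : ℝ → EuclideanSpace ℝ (Fin n) → EuclideanSpace ℝ (Fin m))
    (hysel : ∀ ε > (0 : ℝ), ∀ x, ysel ε x ∈ regMaxSol φ gx Y ε x)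
    (x : EuclideanSpace ℝ (Fin n)) (ε : ℝ) (hε : 0 < ε) :
    (marginalMax φ Y x - ε / 2 * sInf ((fun y => ‖gx x y‖ ^ 2) '' maxSol φ Y x)
        ≤ φ x (ysel ε x) ∧
      φ x (ysel ε x) ≤ marginalMax φ Y x) ∧
    ‖gx x (ysel ε x)‖ ≤ sInf ((fun y => ‖gx x y‖) '' maxSol φ Y x) := by
  have hcontY : ContinuousOn (fun y => φ x y) Y :=
    (hφcont.comp (Continuous.prodMk_right x)).continuousOn
  obtain ⟨ystar, hystarY, hystarmax⟩ := hYcomp.exists_isMaxOn hYne hcontY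
  have hystarmax' : ∀ y' ∈ Y, φ x y' ≤ φ x ystar := fun y' hy' => hystarmax hy'
  have hgreat : IsGreatest ((φ x) '' Y) (φ x ystar) :=
    ⟨mem_image_of_mem _ hystarY, by
      rintro _ ⟨y', hy', rfl⟩; exact hystarmax' y' hy'⟩
  have hf : marginalMax φ Y x = φ x ystar := hgreat.csSup_eq
  obtain ⟨hyεY, hyεopt⟩ := hysel ε hε x
  set yε := ysel ε x
  -- solution set nonempty, with membership of ystar
  have hystarsol : ystar ∈ maxSol φ Y x := ⟨hystarY, hystarmax'⟩
  have hsolne : (maxSol φ Y x).Nonempty := ⟨ystar, hystarsol⟩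
  -- key inequality from regularized optimality, for any maximizer
  have key : ∀ y ∈ maxSol φ Y x,
      φ x y - ε / 2 * ‖gx x y‖ ^ 2 ≤ φ x yε - ε / 2 * ‖gx x yε‖ ^ 2 :=
    fun y hy => hyεopt y hy.1
  have hφle : φ x yε ≤ marginalMax φ Y x := hf ▸ hystarmax' yε hyεY
  have hεpos : 0 < ε / 2 := by linarith
  refine ⟨⟨?_, hφle⟩, ?_⟩
  · -- f(x) - (ε/2) inf ≤ φ(x, yε)
    have hb : ∀ z ∈ (fun y => ‖gx x y‖ ^ 2) '' maxSol φ Y x,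
        (marginalMax φ Y x - φ x yε) / (ε / 2) ≤ z := by
      rintro _ ⟨y, hy, rfl⟩
      have h1 := key y hy
      have h2 : marginalMax φ Y x = φ x y := by
        rw [hf]
        exact le_antisymm (hy.2 ystar hystarY) (hystarmax' y hy.1)
      have h3 : 0 ≤ ‖gx x yε‖ ^ 2 := sq_nonneg _
      rw [div_le_iff₀ hεpos]
      nlinarith
    have := le_csInf (hsolne.image _) hb
    rw [div_le_iff₀ hεpos] at this
    linarith
  · -- norm bound
    refine le_csInf (hsolne.image _) ?_
    rintro _ ⟨y, hy, rfl⟩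
    have h1 := key y hy
    have h2 : φ x yε ≤ φ x y := hy.2 yε hyεY
    have hsq : ‖gx x yε‖ ^ 2 ≤ ‖gx x y‖ ^ 2 := by nlinarith
    have := abs_le_abs (a := ‖gx x yε‖) (b := ‖gx x y‖)
    nlinarith [norm_nonneg (gx x yε), norm_nonneg (gx x y)]
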